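/- arXiv:1701.08480 — 4 statements merged into one kernel-verified Lean document; each statement's English description precedes it below -/
import Mathlib

section
/- If P is a wide rooted branching subposet of B_n with at most n−1 leaves, then there exists a singleton {q} such that the sum over all leaves l of P above {q} of 1/|l| is strictly less than 1. -/
/-! Each leaf `l` contributes `1/|l|` once for each of its `|l|` elements (an empty leaf
contributes nothing, since `1/0 = 0`), so summing the quantity over all `q` gives at most
the number of leaves, which is less than `n`; hence some `q` has a sum below `1`. -/

def IsMaximalIn {n : ℕ} (P : Finset (Finset (Fin n))) (A : Finset (Fin n)) : Prop :=
  A ∈ P ∧ ∀ B ∈ P, A ⊆ B → B = A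

def Branching {n : ℕ} (P : Finset (Finset (Fin n))) : Prop :=
  ∀ A ∈ P, ¬ IsMaximalIn P A →
    2 ≤ (P.filter (fun B => A ⊂ B ∧ B.card = A.card + 1)).card

open Finset

section

variable {α K : Type*} [Fintype α] [DecidableEq α] [Field K] [LinearOrder K]
  [IsStrictOrderedRing K]

theorem sum_sum_filter_mem_inv_card_le (L : Finset (Finset α)) :
    ∑ q, ∑ l ∈ L with q ∈ l, (1 / (#l : K)) ≤ #L := by
  calc ∑ q, ∑ l ∈ L with q ∈ l, (1 / (#l : K))
      = ∑ l ∈ L, #l * (1 / (#l : K)) := by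
        simp_rw [sum_filter]
        rw [sum_comm]
        refine sum_congr rfl fun l _ => ?_
        rw [sum_ite_mem, univ_inter, sum_const, nsmul_eq_mul]
    _ ≤ ∑ _l ∈ L, (1 : K) := sum_le_sum fun l _ => by
        rw [mul_one_div]
        exact div_self_le_one _
    _ = #L := by simp

theorem exists_sum_filter_mem_inv_card_lt_one (L : Finset (Finset α))
    (hL : #L < Fintype.card α) :
    ∃ q, ∑ l ∈ L with q ∈ l, (1 / (#l : K)) < 1 := by
  have hsum : ∑ q, ∑ l ∈ L with q ∈ l, (1 / (#l : K)) < ∑ _q : α, (1 : K) :=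
    calc _ ≤ (#L : K) := sum_sum_filter_mem_inv_card_le L
      _ < Fintype.card α := by exact_mod_cast hL
      _ = ∑ _q : α, (1 : K) := by simp
  obtain ⟨q, -, hq⟩ := exists_lt_of_sum_lt hsum
  exact ⟨q, hq⟩

end

open Finset in
theorem stmt3_general {n : ℕ} (hn : 1 ≤ n) (P : Finset (Finset (Fin n)))
    (hleaves : (P.filter (fun A => ∀ B ∈ P, A ⊆ B → B = A)).card ≤ n - 1) :
    ∃ q : Fin n,
      ∑ l ∈ (P.filter (fun A => ∀ B ∈ P, A ⊆ B → B = A)).filter (fun l => {q} ⊆ l),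
        (1 / (l.card : ℚ)) < 1 := by
  simp only [singleton_subset_iff]
  exact exists_sum_filter_mem_inv_card_lt_one _ (by rw [Fintype.card_fin]; omega)

open Finset in
/-- If a wide rooted branching subposet of `B_n` has at most `n-1` leaves, then there is a
singleton `{q}` for which the sum of `1/|l|` over leaves `l` above `{q}` is less than `1`. -/
theorem stmt3 {n : ℕ} (hn : 1 ≤ n) (P : Finset (Finset (Fin n)))
    (hroot : (∅ : Finset (Fin n)) ∈ P)
    (hwide : ∀ i : Fin n, {i} ∈ P)
    (hbr : Branching P)
    (hleaves : (P.filter (fun A => ∀ B ∈ P, A ⊆ B → B = A)).card ≤ n - 1) :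
    ∃ q : Fin n,
      ∑ l ∈ (P.filter (fun A => ∀ B ∈ P, A ⊆ B → B = A)).filter (fun l => {q} ⊆ l),
        (1 / (l.card : ℚ)) < 1 :=
  stmt3_general hn P hleaves
end

section
/- If P is a rooted branching subposet of B_n whose set of leaves is exactly the set P^q of elements above the singleton {q} restricted to its leaves, then for the subposet P^q = {y ∈ P : {q} ⊆ y}, the sum over leaves l of P^q of 1/|l| is at least 1. -/
/-!
Restrict to the leaves reachable from `{q}` by chains of covers, and let `m` be one of
maximal size. Along a cover chain `{q} = A₁ ⋖ A₂ ⋖ ⋯ ⋖ Aₖ = m` with `Aᵢ₊₁ = insert aᵢ₊₁ Aᵢ`,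
each `Aᵢ` has two covers, so one can climb from `Aᵢ` to a leaf `Lᵢ ⊇ Aᵢ` avoiding `aᵢ₊₁`;
the largest `i` with `Aᵢ ⊆ L` tells these leaves apart. Together with `m` this gives
`k = |m|` reachable leaves, each of size at most `|m|`, so their terms `1/|L|` sum to at
least `1`.
-/

open Finset

variable {α : Type*}

def CoverBranching (Q : Finset (Finset α)) : Prop :=
  ∀ A ∈ Q, ¬ Maximal (· ∈ Q) A → ∃ B ∈ Q, ∃ C ∈ Q, A ⋖ B ∧ A ⋖ C ∧ B ≠ C

def CoverReachable (Q : Finset (Finset α)) : Finset α → Finset α → Prop :=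
  Relation.ReflTransGen fun A B => B ∈ Q ∧ A ⋖ B

open Classical in
noncomputable def reachableLeaves (Q : Finset (Finset α)) (r : Finset α) : Finset (Finset α) :=
  Q.filter fun L => CoverReachable Q r L ∧ Maximal (· ∈ Q) L

variable {Q : Finset (Finset α)} {r A B : Finset α}

theorem CoverReachable.subset (h : CoverReachable Q A B) : A ⊆ B := by
  induction h with
  | refl => exact Subset.rfl
  | tail _ hBC ih => exact ih.trans hBC.2.le

theorem CoverReachable.mem (hA : A ∈ Q) (h : CoverReachable Q A B) : B ∈ Q := by
  induction h with
  | refl => exact hA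
  | tail _ hBC _ => exact hBC.1

theorem mem_reachableLeaves :
    B ∈ reachableLeaves Q r ↔ CoverReachable Q r B ∧ Maximal (· ∈ Q) B := by
  simp only [reachableLeaves, mem_filter, and_iff_right_iff_imp]
  exact fun h => h.2.prop

theorem reachableLeaves_subset [DecidablePred fun A => ∀ B ∈ Q, A ⊆ B → B = A] :
    reachableLeaves Q r ⊆ Q.filter fun A => ∀ B ∈ Q, A ⊆ B → B = A := fun L hL => by
  have hmax := (mem_reachableLeaves.1 hL).2
  exact mem_filter.2 ⟨hmax.prop, fun B hB hLB => Subset.antisymm (hmax.2 hB hLB) hLB⟩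

theorem exists_maximal_of_forall_exists_covBy {S : Finset (Finset α)} (hS : S.Nonempty)
    (h : ∀ B ∈ S, ¬ Maximal (· ∈ Q) B → ∃ C ∈ S, B ⋖ C) : ∃ L ∈ S, Maximal (· ∈ Q) L := by
  obtain ⟨L, hL, hmax⟩ := S.exists_max_image card hS
  refine ⟨L, hL, by_contra fun hL' => ?_⟩
  obtain ⟨C, hC, hLC⟩ := h L hL hL'
  exact (hmax C hC).not_gt (card_lt_card hLC.lt)

namespace CoverBranching

theorem exists_reachable_maximal (hQ : CoverBranching Q) (hA : A ∈ Q) :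
    ∃ L, CoverReachable Q A L ∧ Maximal (· ∈ Q) L := by
  classical
  obtain ⟨L, hL, hmax⟩ := exists_maximal_of_forall_exists_covBy
    (S := Q.filter (CoverReachable Q A)) ⟨A, mem_filter.2 ⟨hA, .refl⟩⟩ fun B hB hB' => by
      rw [mem_filter] at hB
      obtain ⟨C, hC, -, -, hBC, -, -⟩ := hQ B hB.1 hB'
      exact ⟨C, mem_filter.2 ⟨hC, hB.2.tail ⟨hC, hBC⟩⟩, hBC⟩
  exact ⟨L, (mem_filter.1 hL).2, hmax⟩

variable [DecidableEq α]

theorem exists_covBy_notMem (hQ : CoverBranching Q) (hA : A ∈ Q) (hmax : ¬ Maximal (· ∈ Q) A)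
    {a : α} (ha : a ∉ A) : ∃ B ∈ Q, A ⋖ B ∧ a ∉ B := by
  obtain ⟨B, hB, C, hC, hAB, hAC, hBC⟩ := hQ A hA hmax
  have eq_insert : ∀ {D}, A ⋖ D → a ∈ D → D = insert a A := by
    intro D hD haD
    obtain ⟨b, -, rfl⟩ := hD.exists_finset_insert
    obtain rfl | haA := mem_insert.1 haD
    · rfl
    · exact absurd haA ha
  by_contra! h
  exact hBC ((eq_insert hAB (h B hB hAB)).trans (eq_insert hAC (h C hC hAC)).symm)

theorem exists_reachable_maximal_notMem (hQ : CoverBranching Q) (hA : A ∈ Q) {a : α}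
    (ha : a ∉ A) : ∃ L, CoverReachable Q A L ∧ Maximal (· ∈ Q) L ∧ a ∉ L := by
  classical
  obtain ⟨L, hL, hmax⟩ := exists_maximal_of_forall_exists_covBy
    (S := Q.filter fun L => CoverReachable Q A L ∧ a ∉ L)
    ⟨A, mem_filter.2 ⟨hA, .refl, ha⟩⟩ fun B hB hB' => by
      rw [mem_filter] at hB
      obtain ⟨C, hC, hBC, haC⟩ := hQ.exists_covBy_notMem hB.1 hB' hB.2.2
      exact ⟨C, mem_filter.2 ⟨hC, hB.2.1.tail ⟨hC, hBC⟩, haC⟩, hBC⟩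
  obtain ⟨-, hAL, haL⟩ := mem_filter.1 hL
  exact ⟨L, hAL, hmax, haL⟩

-- Each cover step `A ⋖ insert a A` yields a new leaf containing `A` but not `a`.
theorem card_le_card_add_card_filter_not_subset (hQ : CoverBranching Q) (hr : r ∈ Q)
    (hA : CoverReachable Q r A) :
    A.card ≤ r.card + ((reachableLeaves Q r).filter fun L => ¬ A ⊆ L).card := by
  induction hA with
  | refl => omega
  | @tail A A' hrA hAA' ih =>
    obtain ⟨a, ha, rfl⟩ := hAA'.2.exists_finset_insert
    obtain ⟨L, hAL, hL, haL⟩ :=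
      hQ.exists_reachable_maximal_notMem (CoverReachable.mem hr hrA) ha
    have hLnew : L ∉ (reachableLeaves Q r).filter fun L => ¬ A ⊆ L := by
      simp [hAL.subset]
    have hsub : insert L ((reachableLeaves Q r).filter fun L => ¬ A ⊆ L) ⊆
        (reachableLeaves Q r).filter fun L => ¬ insert a A ⊆ L := by
      refine insert_subset (mem_filter.2 ⟨mem_reachableLeaves.2 ⟨hrA.trans hAL, hL⟩, ?_⟩) ?_
      · exact fun h => haL (h (mem_insert_self a A))
      · exact monotone_filter_right _ fun _ _ h h' => h ((subset_insert a A).trans h')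
    calc (insert a A).card = A.card + 1 := card_insert_of_notMem ha
      _ ≤ r.card + (insert L ((reachableLeaves Q r).filter fun L => ¬ A ⊆ L)).card := by
        rw [card_insert_of_notMem hLnew]; omega
      _ ≤ _ := by gcongr

theorem one_le_sum_one_div_card {K : Type*} [Field K] [LinearOrder K] [IsStrictOrderedRing K]
    (hQ : CoverBranching Q) {q : α} (hq : {q} ∈ Q) :
    1 ≤ ∑ L ∈ reachableLeaves Q {q}, 1 / (L.card : K) := by
  set S := reachableLeaves Q {q}
  have card_pos : ∀ L ∈ S, (0 : K) < L.card := fun L hL => by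
    exact_mod_cast card_pos.2 ⟨q, (mem_reachableLeaves.1 hL).1.subset (mem_singleton_self q)⟩
  obtain ⟨m₀, hm₀⟩ := hQ.exists_reachable_maximal hq
  obtain ⟨m, hmS, hm⟩ := S.exists_max_image card ⟨m₀, mem_reachableLeaves.2 hm₀⟩
  set T := insert m (S.filter fun L => ¬ m ⊆ L)
  have hTS : T ⊆ S := insert_subset hmS (filter_subset _ _)
  have hmT : m.card ≤ T.card := by
    have := hQ.card_le_card_add_card_filter_not_subset hq (mem_reachableLeaves.1 hmS).1
    rw [card_insert_of_notMem (by simp)]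
    simpa [add_comm] using this
  calc (1 : K) ≤ T.card / m.card := by
        rw [le_div_iff₀ (card_pos m hmS), one_mul]; exact_mod_cast hmT
    _ = ∑ _L ∈ T, 1 / (m.card : K) := by rw [sum_const, nsmul_eq_mul, mul_one_div]
    _ ≤ ∑ L ∈ T, 1 / (L.card : K) := sum_le_sum fun L hL =>
        one_div_le_one_div_of_le (card_pos L (hTS hL)) (by exact_mod_cast hm L (hTS hL))
    _ ≤ ∑ L ∈ S, 1 / (L.card : K) :=
        sum_le_sum_of_subset_of_nonneg hTS fun L hL _ => (one_div_pos.2 (card_pos L hL)).le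

end CoverBranching

theorem Branching.coverBranching_filter {n : ℕ} {P : Finset (Finset (Fin n))} (hP : Branching P)
    (s : Finset (Fin n)) : CoverBranching (P.filter (s ⊆ ·)) := by
  intro A hA hmax
  rw [mem_filter] at hA
  have hAP : ¬ IsMaximalIn P A := fun h =>
    hmax ⟨mem_filter.2 hA, fun B hB hAB => (h.2 B (mem_filter.1 hB).1 hAB).le⟩
  have cover : ∀ {B}, B ∈ P.filter (fun B => A ⊂ B ∧ B.card = A.card + 1) →
      B ∈ P.filter (s ⊆ ·) ∧ A ⋖ B := by
    intro B hB
    obtain ⟨hBP, hAB, hcard⟩ := mem_filter.1 hB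
    refine ⟨mem_filter.2 ⟨hBP, hA.2.trans hAB.subset⟩,
      covBy_iff_card_sdiff_eq_one.2 ⟨hAB.subset, ?_⟩⟩
    rw [card_sdiff_of_subset hAB.subset]
    omega
  obtain ⟨B, hB, C, hC, hBC⟩ := one_lt_card.1 (hP A hA.1 hAP)
  exact ⟨B, (cover hB).1, C, (cover hC).1, (cover hB).2, (cover hC).2, hBC⟩

open Finset in
theorem stmt4_general {n : ℕ} (P : Finset (Finset (Fin n)))
    (hbr : Branching P)
    (q : Fin n) (hq : ({q} : Finset (Fin n)) ∈ P) :
    1 ≤ ∑ l ∈ (P.filter (fun y => {q} ⊆ y)).filter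
          (fun A => ∀ B ∈ P.filter (fun y => {q} ⊆ y), A ⊆ B → B = A),
        (1 / (l.card : ℚ)) := by
  calc 1 ≤ ∑ L ∈ reachableLeaves (P.filter ({q} ⊆ ·)) {q}, 1 / (L.card : ℚ) :=
        (hbr.coverBranching_filter {q}).one_le_sum_one_div_card (mem_filter.2 ⟨hq, Subset.rfl⟩)
    _ ≤ _ := sum_le_sum_of_subset_of_nonneg reachableLeaves_subset fun _ _ _ => by positivity

open Finset in
/-- For a rooted branching subposet `P` of `B_n` and a singleton `{q} ∈ P`, the sum of
`1/|l|` over the leaves `l` of the subposet `P^q = {y ∈ P : {q} ⊆ y}` is at least `1`. -/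
theorem stmt4 {n : ℕ} (P : Finset (Finset (Fin n)))
    (hroot : (∅ : Finset (Fin n)) ∈ P) (hbr : Branching P)
    (q : Fin n) (hq : ({q} : Finset (Fin n)) ∈ P) :
    1 ≤ ∑ l ∈ (P.filter (fun y => {q} ⊆ y)).filter
          (fun A => ∀ B ∈ P.filter (fun y => {q} ⊆ y), A ⊆ B → B = A),
        (1 / (l.card : ℚ)) :=
  stmt4_general P hbr q hq
end

section
/- For every n ≥ 2, define an n×∞ matrix x by: row i (1 ≤ i ≤ n) has entries x_{i,j} = i+j−1 (mod n, with representatives in {1,...,n}) for j ≤ n−2, and x_{i,j} = i+n−3 (mod n, representative in {1,...,n}) for all j ≥ n−2. Then: (a) in each row the first n−2 entries are distinct and none of them is repeated later in the row; (b) for every t ≥ 1, the n sets {x_{i,1},...,x_{i,t}} for i = 1,...,n are pairwise distinct. -/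
/-!
The first `t` entries of row `i`, each lowered by one, form the cyclic arc of length
`min t (n - 1)` starting at `i - 1` in `ℤ/n`. Such an arc is not the whole circle, so it misses
the residue just before its start, and its start is the only point of the arc with that property;
hence the arc determines its start, and distinct rows have distinct initial sets.
-/

open Finset

lemma Nat.eq_of_add_mod_eq_add_mod {n a s s' : ℕ} (hs : s < n) (hs' : s' < n)
    (h : (a + s) % n = (a + s') % n) : s = s' :=
  (Nat.ModEq.add_left_cancel' a h).eq_of_lt_of_lt hs hs'

def cyclicArc (n a m : ℕ) : Finset ℕ :=
  (range m).image fun s => (a + s) % n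

lemma mem_cyclicArc {n a m v : ℕ} : v ∈ cyclicArc n a m ↔ ∃ s < m, (a + s) % n = v := by
  simp [cyclicArc]

lemma add_sub_one_mod_notMem_cyclicArc {n a m : ℕ} (hm : m ≤ n - 1) :
    (a + (n - 1)) % n ∉ cyclicArc n a m := by
  intro hmem
  obtain ⟨s, hs, hsn⟩ := mem_cyclicArc.mp hmem
  have := Nat.eq_of_add_mod_eq_add_mod (by omega) (by omega) hsn
  omega

lemma cyclicArc_injective {n a a' m : ℕ} (ha : a < n) (ha' : a' < n) (hm0 : 0 < m)
    (hm : m ≤ n - 1) (h : cyclicArc n a m = cyclicArc n a' m) : a = a' := by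
  obtain ⟨s, hs, hsa'⟩ : ∃ s < m, (a + s) % n = a' :=
    mem_cyclicArc.mp (h ▸ mem_cyclicArc.mpr ⟨0, hm0, Nat.mod_eq_of_lt ha'⟩)
  rcases s with _ | r
  · rwa [add_zero, Nat.mod_eq_of_lt ha] at hsa'
  · have hpred : (a' + (n - 1)) % n = (a + r) % n := by
      rw [← hsa', Nat.mod_add_mod, show a + (r + 1) + (n - 1) = a + r + n by omega,
        Nat.add_mod_right]
    have : (a + r) % n ∈ cyclicArc n a' m := h ▸ mem_cyclicArc.mpr ⟨r, by omega, rfl⟩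
    exact absurd (hpred ▸ this) (add_sub_one_mod_notMem_cyclicArc hm)

def kellerRow (n i j : ℕ) : ℕ :=
  (i + min j (n - 1) + n - 2) % n + 1

lemma kellerRow_eq {n i j : ℕ} (hi : 1 ≤ i) (hj : 1 ≤ j) (hn : 2 ≤ n) :
    kellerRow n i j = (i - 1 + (min j (n - 1) - 1)) % n + 1 := by
  have : 1 ≤ min j (n - 1) := le_min hj (by omega)
  rw [kellerRow, show i + min j (n - 1) + n - 2 = i - 1 + (min j (n - 1) - 1) + n by omega,
    Nat.add_mod_right]

lemma kellerRow_ne {n i j j' : ℕ} (hi : 1 ≤ i) (hj : 1 ≤ j) (hjn : j ≤ n - 2) (hjj' : j < j') :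
    kellerRow n i j ≠ kellerRow n i j' := by
  have hn : 2 ≤ n := by omega
  rw [kellerRow_eq hi hj hn, kellerRow_eq hi (by omega) hn, ne_eq, add_left_inj]
  intro h
  have := Nat.eq_of_add_mod_eq_add_mod (by omega) (by omega) h
  omega

lemma image_kellerRow_Icc {n i t : ℕ} (hi : 1 ≤ i) (hn : 2 ≤ n) :
    (Icc 1 t).image (kellerRow n i) = (cyclicArc n (i - 1) (min t (n - 1))).image (· + 1) := by
  ext v
  simp only [mem_image, mem_Icc, mem_cyclicArc]
  constructor
  · rintro ⟨j, ⟨hj1, hjt⟩, rfl⟩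
    refine ⟨_, ⟨min j (n - 1) - 1, ?_, rfl⟩, (kellerRow_eq hi hj1 hn).symm⟩
    omega
  · rintro ⟨_, ⟨s, hs, rfl⟩, rfl⟩
    refine ⟨s + 1, ⟨by omega, by omega⟩, ?_⟩
    rw [kellerRow_eq hi (by omega) hn, show min (s + 1) (n - 1) - 1 = s by omega]

theorem stmt5_general (n : ℕ)
    (x : ℕ → ℕ → ℕ)
    (hx : ∀ i j, x i j = ((i + min j (n - 1) + n - 2) % n) + 1) :
    (∀ i ∈ Finset.Icc 1 n, ∀ j j' : ℕ, 1 ≤ j → j ≤ n - 2 → j < j' → x i j ≠ x i j') ∧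
    (∀ t : ℕ, 1 ≤ t → ∀ i ∈ Finset.Icc 1 n, ∀ i' ∈ Finset.Icc 1 n, i ≠ i' →
      (Finset.Icc 1 t).image (x i) ≠ (Finset.Icc 1 t).image (x i')) := by
  obtain rfl : x = kellerRow n := funext fun i => funext (hx i)
  refine ⟨fun i hi j j' hj hjn hjj' => kellerRow_ne (mem_Icc.mp hi).1 hj hjn hjj', ?_⟩
  intro t ht i hi i' hi' hii' h
  rw [mem_Icc] at hi hi'
  have hn : 2 ≤ n := by omega
  rw [image_kellerRow_Icc hi.1 hn, image_kellerRow_Icc hi'.1 hn] at h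
  have := cyclicArc_injective (by omega) (by omega) (by omega) (min_le_right _ _)
    (image_injective (add_left_injective 1) h)
  omega

open Finset in
/-- The explicit solution of Keller's problem when every set is `{1,…,n}` : row `i`
(`1 ≤ i ≤ n`) is `i, i+1, …, i+n-3, i+n−2 repeated, …` taken mod `n` with representatives
in `{1,…,n}`.  (a) the first `n-2` entries of each row are distinct and never repeated
later; (b) at every time `t ≥ 1` the `n` initial-segment sets are pairwise distinct. -/
theorem stmt5 (n : ℕ) (hn : 2 ≤ n)
    (x : ℕ → ℕ → ℕ)
    (hx : ∀ i j, x i j = ((i + min j (n - 1) + n - 2) % n) + 1) :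
    (∀ i ∈ Finset.Icc 1 n, ∀ j j' : ℕ, 1 ≤ j → j ≤ n - 2 → j < j' → x i j ≠ x i j') ∧
    (∀ t : ℕ, 1 ≤ t → ∀ i ∈ Finset.Icc 1 n, ∀ i' ∈ Finset.Icc 1 n, i ≠ i' →
      (Finset.Icc 1 t).image (x i) ≠ (Finset.Icc 1 t).image (x i')) :=
  stmt5_general n x hx
end

section
/- Let S_1, S_2, ... be a sequence of finite sets each of cardinality at least 2, and let c be any fixed element. Then there exists a sequence x_1, x_2, ... with x_j ∈ S_j, x_j ≠ c for all j, and which is regular: x_j ∉ {x_1,...,x_{j−1}} whenever |S_j \ {x_1,...,x_{j−1}}| ≥ 2. -/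
/-! The choice at step `j` is local: if at least two elements of `S j` are still unused, one of
them differs from `c`; otherwise any element of `S j` other than `c` will do. A sequence whose
`j`-th term is any prescribed function of the earlier terms is obtained by recursion on the
finite set of values used so far. -/

open Finset

lemma exists_regular_mem_ne {α : Type*} [DecidableEq α]
    {s : Finset α} (hs : 2 ≤ s.card) (U : Finset α) (c : α) :
    ∃ x ∈ s, x ≠ c ∧ (2 ≤ (s \ U).card → x ∉ U) := by
  by_cases hfresh : 2 ≤ (s \ U).card
  · obtain ⟨x, hx, hxc⟩ := exists_mem_ne hfresh c
    exact ⟨x, (mem_sdiff.1 hx).1, hxc, fun _ => (mem_sdiff.1 hx).2⟩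
  · obtain ⟨x, hx, hxc⟩ := exists_mem_ne hs c
    exact ⟨x, hx, hxc, fun h => absurd h hfresh⟩

lemma exists_seq_eq_apply_image_range {α : Type*} [DecidableEq α]
    (pick : ℕ → Finset α → α) :
    ∃ x : ℕ → α, ∀ j, x j = pick j ((range j).image x) := by
  let used : ℕ → Finset α := fun n => Nat.rec ∅ (fun j U => insert (pick j U) U) n
  refine ⟨fun j => pick j (used j), fun j => congrArg (pick j) ?_⟩
  induction j with
  | zero => rfl
  | succ j ih => rw [range_add_one, image_insert, ← ih]

open Finset in
/-- One may always construct a regular representative of a sequence of finite sets of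
cardinality at least 2 while avoiding one designated forbidden element `c`. -/
theorem stmt9 {α : Type*} [DecidableEq α]
    (S : ℕ → Finset α) (hS : ∀ j, 2 ≤ (S j).card) (c : α) :
    ∃ x : ℕ → α, ∀ j : ℕ,
      x j ∈ S j ∧ x j ≠ c ∧
      (2 ≤ ((S j) \ ((Finset.range j).image x)).card →
        x j ∉ (Finset.range j).image x) := by
  choose pick hpick_mem hpick using
    fun j U => exists_regular_mem_ne (hS j) U c
  obtain ⟨x, hx⟩ := exists_seq_eq_apply_image_range pick
  exact ⟨x, fun j => hx j ▸ ⟨hpick_mem j _, hpick j _⟩⟩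
end
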